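/- In the tensor product L_q(i) ⊗ L_q(1) of simple LU_q-modules with i = rℓ + s, 1 ≤ s < ℓ, the vector x = m_{ℓ-s-1} ⊗ m₁' + q^{ℓ-s} m_{ℓ-s} ⊗ m₀' is a highest weight vector of weight i−1 (i.e., H·x = (i−1)x and E^{(n)}·x = 0 for all n ≥ 1), and the submodule it generates is spanned by the vectors Δ(F^{(n)})x for 0 ≤ n₁ ≤ r, 0 ≤ n₂ < s (n = n₁ℓ + n₂); in particular Δ(F^{(n)})x = [ℓ+n−s choose n]_q (m_{ℓ+n-s-1} ⊗ m₁' + q^{ℓ+n-s} m_{ℓ+n-s} ⊗ m₀'), which vanishes when n₁ ≥ r+1 or n₂ ≥ s, so dim⟨x⟩ ≤ (r+1)s. -/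
import Mathlib


/-- The balanced Gaussian binomial coefficient. -/
noncomputable def gB (q : ℂ) : ℕ → ℕ → ℂ
  | _, 0 => 1
  | 0, _ + 1 => 0
  | m + 1, n + 1 => q ^ (-((n : ℤ) + 1)) * gB q m (n + 1) + q ^ ((m : ℤ) - n) * gB q m n

/-- Action of `E^{(n)}` on the Weyl module `Δ_q(i)` (coefficient functions on `m_0,…,m_i`). -/
noncomputable def Eop (q : ℂ) (i n : ℕ) (v : ℤ → ℂ) : ℤ → ℂ :=
  fun k => if 0 ≤ k ∧ k ≤ (i : ℤ) then gB q ((i : ℤ) - k).toNat n * v (k + n) else 0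

/-- Action of `F^{(n)}` on `Δ_q(i)`. -/
noncomputable def Fop (q : ℂ) (i n : ℕ) (v : ℤ → ℂ) : ℤ → ℂ :=
  fun k => if 0 ≤ k ∧ k ≤ (i : ℤ) then gB q k.toNat n * v (k - n) else 0

/-- Action of `K^m` on `Δ_q(i)`. -/
noncomputable def Kpow (q : ℂ) (i : ℕ) (m : ℤ) (v : ℤ → ℂ) : ℤ → ℂ :=
  fun k => if 0 ≤ k ∧ k ≤ (i : ℤ) then q ^ (((i : ℤ) - 2 * k) * m) * v k else 0

/-- An operator on the first tensor factor. -/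
noncomputable def op1 (A : (ℤ → ℂ) → ℤ → ℂ) (u : ℤ → ℤ → ℂ) : ℤ → ℤ → ℂ :=
  fun k e => A (fun k' => u k' e) k

/-- An operator on the second tensor factor. -/
noncomputable def op2 (B : (ℤ → ℂ) → ℤ → ℂ) (u : ℤ → ℤ → ℂ) : ℤ → ℤ → ℂ :=
  fun k e => B (u k) e

/-- The coproduct action of `E^{(n)}` on `Δ_q(j) ⊗ Δ_q(1)`:
`Δ(E^{(n)}) = ∑_{m=0}^{n} q^{-m(n-m)} E^{(n-m)}K^{-m} ⊗ E^{(m)}`. -/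
noncomputable def dE (q : ℂ) (j n : ℕ) (u : ℤ → ℤ → ℂ) : ℤ → ℤ → ℂ :=
  fun k e => ∑ m ∈ Finset.range (n + 1),
    q ^ (-((m : ℤ) * ((n : ℤ) - m))) *
      op1 (fun v => Eop q j (n - m) (Kpow q j (-(m : ℤ)) v)) (op2 (Eop q 1 m) u) k e

/-- The coproduct action of `F^{(n)}` on `Δ_q(j) ⊗ Δ_q(1)`:
`Δ(F^{(n)}) = ∑_{m=0}^{n} q^{m(n-m)} F^{(m)} ⊗ K^m F^{(n-m)}`. -/
noncomputable def dF (q : ℂ) (j n : ℕ) (u : ℤ → ℤ → ℂ) : ℤ → ℤ → ℂ :=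
  fun k e => ∑ m ∈ Finset.range (n + 1),
    q ^ ((m : ℤ) * ((n : ℤ) - m)) *
      op1 (Fop q j m) (op2 (fun v => Kpow q 1 (m : ℤ) (Fop q 1 (n - m) v)) u) k e

/-- The vector `x = m_{ℓ-s-1} ⊗ m₁' + q^{ℓ-s} m_{ℓ-s} ⊗ m₀'` in `Δ_q(j) ⊗ Δ_q(1)`. -/
noncomputable def xvec (q : ℂ) (ℓ s : ℕ) : ℤ → ℤ → ℂ :=
  fun k e =>
    (if k = (ℓ : ℤ) - s - 1 ∧ e = 1 then 1 else 0) +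
    (if k = (ℓ : ℤ) - s ∧ e = 0 then q ^ ((ℓ : ℤ) - s) else 0)

/-- The vector `m_{ℓ+n-s-1} ⊗ m₁' + q^{ℓ+n-s} m_{ℓ+n-s} ⊗ m₀'` (with `m_k = 0` outside
`0 ≤ k ≤ j`). -/
noncomputable def wvec (q : ℂ) (j ℓ s n : ℕ) : ℤ → ℤ → ℂ :=
  fun k e =>
    (if k = (ℓ : ℤ) + n - s - 1 ∧ 0 ≤ k ∧ k ≤ (j : ℤ) ∧ e = 1 then 1 else 0) +
    (if k = (ℓ : ℤ) + n - s ∧ 0 ≤ k ∧ k ≤ (j : ℤ) ∧ e = 0 then q ^ ((ℓ : ℤ) + n - s) else 0)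


section Aux


/-- Unbalanced Gaussian binomial at parameter Q. -/
noncomputable def Gb (Q : ℂ) : ℕ → ℕ → ℂ
  | _, 0 => 1
  | 0, _ + 1 => 0
  | m + 1, n + 1 => Gb Q m (n + 1) + Q ^ (m - n) * Gb Q m n

lemma Gb_zero_right (Q : ℂ) (m : ℕ) : Gb Q m 0 = 1 := by cases m <;> rfl

lemma Gb_eq_zero_of_lt (Q : ℂ) : ∀ m n, m < n → Gb Q m n = 0 := by
  intro m
  induction m with
  | zero => intro n hn; match n, hn with | n+1, _ => rfl
  | succ m ih =>
    intro n hn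
    match n, hn with
    | n+1, hn =>
      show Gb Q m (n+1) + Q ^ (m-n) * Gb Q m n = 0
      rw [ih (n+1) (by omega), ih n (by omega)]; ring

lemma Gb_self (Q : ℂ) : ∀ m, Gb Q m m = 1 := by
  intro m
  induction m with
  | zero => rfl
  | succ m ih =>
    show Gb Q m (m+1) + Q ^ (m-m) * Gb Q m m = 1
    rw [Gb_eq_zero_of_lt Q m (m+1) (by omega), ih]; simp

/-- q-integer. -/
noncomputable def qint (Q : ℂ) (n : ℕ) : ℂ := ∑ i ∈ Finset.range n, Q ^ i

lemma qint_add (Q : ℂ) (a b : ℕ) : qint Q (a + b) = qint Q a + Q ^ a * qint Q b := by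
  unfold qint
  rw [Finset.sum_range_add, Finset.mul_sum]
  congr 1; apply Finset.sum_congr rfl; intro i _; rw [pow_add]

lemma Gb_one (Q : ℂ) : ∀ m, Gb Q m 1 = qint Q m := by
  intro m
  induction m with
  | zero => simp [qint]; rfl
  | succ m ih =>
    show Gb Q m 1 + Q ^ (m - 0) * Gb Q m 0 = qint Q (m + 1)
    rw [ih, Gb_zero_right, qint_add]; simp [qint]

lemma Gb_absorb (Q : ℂ) : ∀ m n, qint Q (n+1) * Gb Q m (n+1) = qint Q (m - n) * Gb Q m n := by
  intro m
  induction m with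
  | zero =>
    intro n
    rw [Gb_eq_zero_of_lt Q 0 (n+1) (by omega)]
    simp [qint]
  | succ m ih =>
    intro n
    by_cases hnm : n ≤ m
    · show qint Q (n+1) * (Gb Q m (n+1) + Q ^ (m-n) * Gb Q m n) = qint Q (m+1-n) * Gb Q (m+1) n
      cases n with
      | zero =>
        simp only [Nat.sub_zero, Gb_zero_right, Gb_one, Gb_self]
        simp [qint, Finset.sum_range_succ]
        rw [Gb_one]; rfl
      | succ n' =>
        have hn'm : n' + 1 ≤ m := hnm
        obtain ⟨a, ha⟩ : ∃ a, m - (n'+1) = a := ⟨_, rfl⟩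
        have ha1 : m - n' = a + 1 := by omega
        show qint Q (n'+2) * (Gb Q m (n'+2) + Q ^ (m-(n'+1)) * Gb Q m (n'+1)) =
          qint Q (m+1-(n'+1)) * (Gb Q m (n'+1) + Q ^ (m-n') * Gb Q m n')
        have hm1 : m + 1 - (n'+1) = a + 1 := by omega
        rw [ha, ha1, hm1]
        have hA : qint Q a + Q ^ a * qint Q (n'+2) = qint Q (a+1) + Q ^ (a+1) * qint Q (n'+1) := by
          rw [← qint_add, ← qint_add]; congr 1; omega
        have i1 := ih (n'+1)
        have i2 := ih n'
        rw [ha] at i1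
        rw [ha1] at i2
        linear_combination i1 + Q ^ (a+1) * i2 + Gb Q m (n'+1) * hA
    · rw [Gb_eq_zero_of_lt Q (m+1) (n+1) (by omega)]
      have : m + 1 - n = 0 ∨ n = m + 1 := by omega
      rcases this with h | h2
      · rw [h]; simp [qint]
      · rw [h2]
        simp [qint]


lemma Gb_succ_succ (Q : ℂ) (m n : ℕ) :
    Gb Q (m+1) (n+1) = Gb Q m (n+1) + Q ^ (m - n) * Gb Q m n := rfl

variable {Q : ℂ} {ℓ : ℕ}

lemma qint_ne_zero (hℓ : 2 ≤ ℓ) (hQ : IsPrimitiveRoot Q ℓ) {k : ℕ} (h1 : 1 ≤ k) (h2 : k < ℓ) : qint Q k ≠ 0 := by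
  intro h
  have := geom_sum_mul Q k
  rw [show (∑ i ∈ Finset.range k, Q ^ i) = qint Q k from rfl, h, zero_mul] at this
  have hpow : Q ^ k = 1 := by
    have := this.symm
    rw [sub_eq_zero] at this
    exact this
  exact hQ.pow_ne_one_of_pos_of_lt (by omega) h2 hpow

lemma qint_ell (hℓ : 2 ≤ ℓ) (hQ : IsPrimitiveRoot Q ℓ) : qint Q ℓ = 0 :=
  hQ.geom_sum_eq_zero (by omega)

lemma Qpow_reduce (hQ : IsPrimitiveRoot Q ℓ) (t e : ℕ) : Q ^ (t * ℓ + e) = Q ^ e := by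
  rw [pow_add, mul_comm t ℓ, pow_mul, hQ.pow_eq_one, one_pow, one_mul]

lemma Gb_row_step (hℓ : 2 ≤ ℓ) (hQ : IsPrimitiveRoot Q ℓ) {d : ℕ} (hd : d + 1 ≤ ℓ - 1) :
    Gb Q (ℓ-1) (d+1) = -(Q ^ (ℓ-1-d) * Gb Q (ℓ-1) d) := by
  have habs := Gb_absorb Q (ℓ-1) d
  have hsplit : qint Q ℓ = qint Q (ℓ-1-d) + Q ^ (ℓ-1-d) * qint Q (d+1) := by
    rw [← qint_add]; congr 1; omega
  rw [qint_ell hℓ hQ] at hsplit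
  apply mul_left_cancel₀ (qint_ne_zero hℓ hQ (k := d+1) (by omega) (by omega))
  rw [habs]
  linear_combination (-(Gb Q (ℓ-1) d)) * hsplit


lemma div_mod_eq_of {ℓ : ℕ} (hℓ0 : 0 < ℓ) {n c d : ℕ} (h : n = ℓ * c + d) (hd : d < ℓ) :
    n / ℓ = c ∧ n % ℓ = d := by
  subst h
  constructor
  · rw [Nat.mul_add_div hℓ0, Nat.div_eq_of_lt hd]
    omega
  · rw [Nat.mul_add_mod, Nat.mod_eq_of_lt hd]

lemma Gb_lucas (hℓ : 2 ≤ ℓ) (hQ : IsPrimitiveRoot Q ℓ) :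
    ∀ M n : ℕ, Gb Q M n = (Nat.choose (M / ℓ) (n / ℓ) : ℂ) * Gb Q (M % ℓ) (n % ℓ) := by
  have hℓ0 : 0 < ℓ := by omega
  intro M
  induction M with
  | zero =>
    intro n
    simp only [Nat.zero_div, Nat.zero_mod]
    rcases Nat.eq_zero_or_pos n with h | h
    · subst h; simp [Gb_zero_right]
    · rw [Gb_eq_zero_of_lt Q 0 n h]
      rcases Nat.eq_zero_or_pos (n / ℓ) with h1 | h1
      · rw [h1]
        have h2 : 0 < n % ℓ := by
          rcases Nat.eq_zero_or_pos (n % ℓ) with h2 | h2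
          · exfalso
            have h3 := Nat.div_add_mod n ℓ
            rw [h1, h2, Nat.mul_zero] at h3
            omega
          · exact h2
        rw [Gb_eq_zero_of_lt Q 0 (n % ℓ) h2]; ring
      · rw [Nat.choose_eq_zero_of_lt (by omega)]; simp
  | succ M ih =>
    intro n
    cases n with
    | zero => simp [Gb_zero_right]
    | succ n' =>
      obtain ⟨a, b, hM, hb⟩ : ∃ a b, M = ℓ * a + b ∧ b < ℓ :=
        ⟨M / ℓ, M % ℓ, (Nat.div_add_mod M ℓ).symm, Nat.mod_lt M hℓ0⟩
      obtain ⟨c, d, hn, hd⟩ : ∃ c d, n' = ℓ * c + d ∧ d < ℓ :=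
        ⟨n' / ℓ, n' % ℓ, (Nat.div_add_mod n' ℓ).symm, Nat.mod_lt n' hℓ0⟩
      obtain ⟨hMdiv, hMmod⟩ := div_mod_eq_of hℓ0 hM hb
      obtain ⟨hndiv, hnmod⟩ := div_mod_eq_of hℓ0 hn hd
      rw [Gb_succ_succ, ih (n'+1), ih n', hMdiv, hMmod, hndiv, hnmod]
      have hpow : ∀ t e : ℕ, Q ^ (t * ℓ + e) = Q ^ e := Qpow_reduce hQ
      have hMn : c ≤ a → d ≤ b → M - n' = (a - c) * ℓ + (b - d) := by
        intro hca hdb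
        rw [hM, hn]
        obtain ⟨e, rfl⟩ := Nat.exists_eq_add_of_le hca
        have h1 : c + e - c = e := by omega
        rw [Nat.mul_add, h1, mul_comm e ℓ]
        generalize ℓ * c = A
        generalize ℓ * e = B
        omega
      by_cases hbℓ : b + 1 < ℓ
      · obtain ⟨hM1div, hM1mod⟩ := div_mod_eq_of hℓ0
          (show M + 1 = ℓ * a + (b+1) by rw [hM, Nat.add_assoc]) hbℓ
        rw [hM1div, hM1mod]
        by_cases hdℓ : d + 1 < ℓ
        · obtain ⟨hn1div, hn1mod⟩ := div_mod_eq_of hℓ0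
            (show n' + 1 = ℓ * c + (d+1) by rw [hn, Nat.add_assoc]) hdℓ
          rw [hn1div, hn1mod, Gb_succ_succ Q b d]
          by_cases hca : c ≤ a
          · by_cases hdb : d ≤ b
            · rw [hMn hca hdb, hpow]
              ring
            · rw [Gb_eq_zero_of_lt Q b d (by omega),
                Gb_eq_zero_of_lt Q b (d+1) (by omega)]
              ring
          · rw [Nat.choose_eq_zero_of_lt (by omega)]
            push_cast
            ring
        · obtain ⟨hn1div, hn1mod⟩ := div_mod_eq_of hℓ0
            (show n' + 1 = ℓ * (c+1) + 0
              from by rw [hn, Nat.mul_add, Nat.mul_one]; generalize ℓ * c = A; omega) hℓ0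
          rw [hn1div, hn1mod, Gb_eq_zero_of_lt Q b d (by omega), Gb_zero_right, Gb_zero_right]
          ring
      · obtain ⟨hM1div, hM1mod⟩ := div_mod_eq_of hℓ0
          (show M + 1 = ℓ * (a+1) + 0
            from by rw [hM, Nat.mul_add, Nat.mul_one]; generalize ℓ * a = A; omega) hℓ0
        rw [hM1div, hM1mod]
        have hb1 : b = ℓ - 1 := by omega
        have hdb : d ≤ b := by omega
        by_cases hdℓ : d + 1 < ℓ
        · obtain ⟨hn1div, hn1mod⟩ := div_mod_eq_of hℓ0
            (show n' + 1 = ℓ * c + (d+1) by rw [hn, Nat.add_assoc]) hdℓ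
          rw [hn1div, hn1mod, Gb_eq_zero_of_lt Q 0 (d+1) (by omega)]
          by_cases hca : c ≤ a
          · rw [hMn hca hdb, hb1, Gb_row_step hℓ hQ (by omega), hpow (a-c) (ℓ-1-d)]
            ring
          · rw [Nat.choose_eq_zero_of_lt (by omega)]
            push_cast
            ring
        · obtain ⟨hn1div, hn1mod⟩ := div_mod_eq_of hℓ0
            (show n' + 1 = ℓ * (c+1) + 0
              from by rw [hn, Nat.mul_add, Nat.mul_one]; generalize ℓ * c = A; omega) hℓ0
          rw [hn1div, hn1mod]
          have hdb1 : d = b := by omega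
          by_cases hca : c ≤ a
          · rw [hMn hca hdb, hdb1, Nat.sub_self, hpow (a-c) 0, pow_zero, Gb_self Q b,
              Gb_zero_right, Gb_zero_right]
            push_cast [Nat.choose_succ_succ]
            ring
          · rw [Nat.choose_eq_zero_of_lt (show a < c by omega),
              Nat.choose_eq_zero_of_lt (show a < c + 1 by omega),
              Nat.choose_eq_zero_of_lt (show a + 1 < c + 1 by omega)]
            push_cast
            ring

lemma Gb_vanish (hℓ : 2 ≤ ℓ) (hQ : IsPrimitiveRoot Q ℓ) {M n : ℕ} (h : M % ℓ < n % ℓ) :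
    Gb Q M n = 0 := by
  rw [Gb_lucas hℓ hQ, Gb_eq_zero_of_lt Q _ _ h, mul_zero]

lemma gB_zero_right (q : ℂ) (m : ℕ) : gB q m 0 = 1 := by cases m <;> rfl

lemma gB_succ_succ (q : ℂ) (m n : ℕ) :
    gB q (m+1) (n+1) = q ^ (-((n : ℤ) + 1)) * gB q m (n + 1) + q ^ ((m : ℤ) - n) * gB q m n := rfl

lemma zpow_mul_zpow {q : ℂ} (hq0 : q ≠ 0) (a b : ℤ) (x : ℂ) :
    q^a * (q^b * x) = q^(a+b) * x := by rw [← mul_assoc, ← zpow_add₀ hq0]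

lemma gB_eq_Gb {q : ℂ} (hq0 : q ≠ 0) :
    ∀ m n : ℕ, gB q m n = q ^ ((n:ℤ) * ((n:ℤ) - m)) * Gb (q^2) m n := by
  intro m
  induction m with
  | zero =>
    intro n
    cases n with
    | zero => simp [gB_zero_right, Gb_zero_right]
    | succ n => show (0:ℂ) = _ * Gb (q^2) 0 (n+1); show (0:ℂ) = _ * 0; rw [mul_zero]
  | succ m ih =>
    intro n
    cases n with
    | zero => simp [gB_zero_right, Gb_zero_right]
    | succ n =>
      rw [gB_succ_succ, ih (n+1), ih n, Gb_succ_succ]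
      by_cases hnm : n ≤ m
      · have h2 : ((q^2 : ℂ)) ^ (m - n) = q ^ (2*((m:ℤ) - n)) := by
          rw [← pow_mul, ← zpow_natCast q (2*(m-n))]
          congr 1
          push_cast [Nat.cast_sub hnm]
          ring
        rw [h2, mul_add, zpow_mul_zpow hq0, zpow_mul_zpow hq0, zpow_mul_zpow hq0]
        congr 2
        · push_cast; ring
        · congr 1
          push_cast; ring
      · rw [Gb_eq_zero_of_lt (q^2) m n (by omega), Gb_eq_zero_of_lt (q^2) m (n+1) (by omega)]
        ring

lemma gB_eq_zero_of_lt {q : ℂ} (hq0 : q ≠ 0) (m n : ℕ) (h : m < n) : gB q m n = 0 := by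
  rw [gB_eq_Gb hq0, Gb_eq_zero_of_lt (q^2) m n h, mul_zero]

lemma gB_vanish {q : ℂ} {ℓ : ℕ} (hq0 : q ≠ 0) (hℓ : 2 ≤ ℓ) (hQ : IsPrimitiveRoot (q^2) ℓ)
    {M n : ℕ} (h : M % ℓ < n % ℓ) : gB q M n = 0 := by
  rw [gB_eq_Gb hq0, Gb_vanish hℓ hQ h, mul_zero]

lemma gB_one_one (q : ℂ) : gB q 1 1 = 1 := by
  have h0 : gB q 0 1 = 0 := rfl
  have h1 : gB q 0 0 = 1 := rfl
  rw [gB_succ_succ, h0, h1]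
  simp

lemma gB_zero_left (q : ℂ) (n : ℕ) : gB q 0 (n+1) = 0 := rfl

end Aux

/-- In `L_q(i) ⊗ L_q(1)` (computed inside `Δ_q(j) ⊗ Δ_q(1)` with `i = rℓ+s`, `1 ≤ s < ℓ`,
`j = i + 2(ℓ-s-1)`), the vector `x = m_{ℓ-s-1} ⊗ m₁' + q^{ℓ-s} m_{ℓ-s} ⊗ m₀'` is a highest
weight vector of weight `i-1`; moreover
`Δ(F^{(n)})x = [ℓ+n-s choose n]_q (m_{ℓ+n-s-1} ⊗ m₁' + q^{ℓ+n-s} m_{ℓ+n-s} ⊗ m₀')`, which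
vanishes when `n₁ ≥ r+1` or `n₂ ≥ s` (where `n = n₁ℓ + n₂`, `n₂ < ℓ`), so the span of all
`Δ(F^{(n)})x` has dimension at most `(r+1)s`. -/
theorem tensor_highest_weight (q : ℂ) (ℓ r s : ℕ) (hq0 : q ≠ 0) (hℓ : 2 ≤ ℓ)
    (hq : IsPrimitiveRoot (q ^ 2) ℓ) (hs1 : 1 ≤ s) (hsℓ : s < ℓ)
    (i j : ℕ) (hi : i = r * ℓ + s) (hj : j = i + 2 * (ℓ - s - 1)) :
    (∀ k e : ℤ, ((j : ℂ) - 2 * (k : ℂ) + 1 - 2 * (e : ℂ)) * xvec q ℓ s k e =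
      ((i : ℂ) - 1) * xvec q ℓ s k e) ∧
    (∀ n : ℕ, 1 ≤ n → dE q j n (xvec q ℓ s) = 0) ∧
    (∀ n : ℕ, dF q j n (xvec q ℓ s) =
      fun k e => gB q (ℓ + n - s) n * wvec q j ℓ s n k e) ∧
    (∀ n n₁ n₂ : ℕ, n = n₁ * ℓ + n₂ → n₂ < ℓ → (r + 1 ≤ n₁ ∨ s ≤ n₂) →
      dF q j n (xvec q ℓ s) = 0) ∧
    Module.finrank ℂ
        ↥(Submodule.span ℂ (Set.range fun n : ℕ => dF q j n (xvec q ℓ s))) ≤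
      (r + 1) * s := by
  have hjC : (j:ℂ) = (i:ℂ) + 2*((ℓ:ℂ) - (s:ℂ) - 1) := by
    have hℓs1 : ((ℓ - s - 1 : ℕ) : ℂ) = (ℓ:ℂ) - s - 1 := by
      rw [Nat.cast_sub (show 1 ≤ ℓ - s by omega), Nat.cast_sub (show s ≤ ℓ by omega)]
      norm_num
    rw [hj]
    push_cast [hℓs1]
    ring
  have part1 : ∀ k e : ℤ, ((j : ℂ) - 2 * (k : ℂ) + 1 - 2 * (e : ℂ)) * xvec q ℓ s k e =
      ((i : ℂ) - 1) * xvec q ℓ s k e := by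
    intro k e
    simp only [xvec]
    by_cases hA : k = (ℓ:ℤ) - s - 1 ∧ e = 1
    · obtain ⟨hk1, he1⟩ := hA
      subst hk1; subst he1
      rw [if_pos ⟨rfl, rfl⟩, if_neg (by omega)]
      push_cast
      ring_nf
      linear_combination hjC
    · rw [if_neg hA]
      by_cases hB : k = (ℓ:ℤ) - s ∧ e = 0
      · obtain ⟨hk1, he1⟩ := hB
        subst hk1; subst he1
        rw [if_pos ⟨rfl, rfl⟩]
        push_cast
        linear_combination (q ^ ((ℓ:ℤ) - s)) * hjC
      · rw [if_neg hB]
        ring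
  have part3 : ∀ n : ℕ, dF q j n (xvec q ℓ s) =
      fun k e => gB q (ℓ + n - s) n * wvec q j ℓ s n k e := by
    have pw3 : ∀ (a b c : ℤ) (G : ℂ), q^a * (G * (q^b * q^c)) = q^(a+b+c) * G := by
      intro a b c G
      rw [show a+b+c = a+(b+c) from by ring, zpow_add₀ hq0, zpow_add₀ hq0]
      ring
    intro n
    funext k e
    show (∑ m ∈ Finset.range (n + 1),
        q ^ ((m : ℤ) * ((n : ℤ) - m)) *
          op1 (Fop q j m) (op2 (fun v => Kpow q 1 (m : ℤ) (Fop q 1 (n - m) v)) (xvec q ℓ s)) k e)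
      = gB q (ℓ + n - s) n * wvec q j ℓ s n k e
    have hterm : ∀ m : ℕ,
        op1 (Fop q j m) (op2 (fun v => Kpow q 1 (m : ℤ) (Fop q 1 (n - m) v)) (xvec q ℓ s)) k e
        = (if 0 ≤ k ∧ k ≤ (j:ℤ) then gB q k.toNat m *
            (if 0 ≤ e ∧ e ≤ 1 then q ^ (((1:ℤ) - 2*e)*(m:ℤ)) *
              (gB q e.toNat (n-m) * xvec q ℓ s (k - m) (e - ((n - m : ℕ) : ℤ))) else 0) else 0) := by
      intro m
      simp only [op1, op2, Fop, Kpow]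
      by_cases he : 0 ≤ e ∧ e ≤ 1 <;> simp [he, Nat.cast_one]
    rw [Finset.sum_congr rfl (fun m _ => by rw [hterm m])]
    by_cases hk : 0 ≤ k ∧ k ≤ (j:ℤ)
    · by_cases he : 0 ≤ e ∧ e ≤ 1
      · simp only [if_pos hk, if_pos he]
        have he01 : e = 0 ∨ e = 1 := by omega
        rcases he01 with rfl | rfl
        · -- e = 0 : only the m = n term survives
          rw [Finset.sum_range_succ,
            Finset.sum_eq_zero (fun m hm => by
              rw [gB_eq_zero_of_lt hq0 (Int.toNat 0) (n - m)
                (by have := Finset.mem_range.mp hm; omega)]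
              ring), zero_add]
          simp only [Nat.sub_self, Nat.cast_zero, Int.toNat_zero, gB_zero_right, sub_self,
            sub_zero, mul_zero, zpow_zero, one_mul]
          by_cases hkv : k = (ℓ:ℤ) - s + n
          · have c1 : ¬(k - (n:ℤ) = (ℓ:ℤ) - (s:ℤ) - 1 ∧ (0:ℤ) = 1) := by omega
            have c2 : k - (n:ℤ) = (ℓ:ℤ) - (s:ℤ) := by omega
            have hx : xvec q ℓ s (k - (n:ℤ)) 0 = q ^ ((ℓ:ℤ) - s) := by
              simp only [xvec, and_true]
              rw [if_neg c1, if_pos c2]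
              ring
            have d1 : ¬(k = (ℓ:ℤ) + (n:ℤ) - (s:ℤ) - 1 ∧ 0 ≤ k ∧ k ≤ (j:ℤ) ∧ (0:ℤ) = 1) := by
              omega
            have d2 : k = (ℓ:ℤ) + (n:ℤ) - (s:ℤ) ∧ 0 ≤ k ∧ k ≤ (j:ℤ) := by omega
            have hw : wvec q j ℓ s n k 0 = q ^ ((ℓ:ℤ) + n - s) := by
              simp only [wvec, and_true]
              rw [if_neg d1, if_pos d2]
              ring
            rw [hx, hw, show (Int.toNat k) = ℓ + n - s from by omega, ← zpow_add₀ hq0,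
              show (n:ℤ) + ((ℓ:ℤ) - s) = (ℓ:ℤ) + n - s from by ring]
          · have c1 : ¬(k - (n:ℤ) = (ℓ:ℤ) - (s:ℤ) - 1 ∧ (0:ℤ) = 1) := by omega
            have c2 : ¬(k - (n:ℤ) = (ℓ:ℤ) - (s:ℤ)) := by omega
            have hx : xvec q ℓ s (k - (n:ℤ)) 0 = 0 := by
              simp only [xvec, and_true]
              rw [if_neg c1, if_neg c2]
              ring
            have d1 : ¬(k = (ℓ:ℤ) + (n:ℤ) - (s:ℤ) - 1 ∧ 0 ≤ k ∧ k ≤ (j:ℤ) ∧ (0:ℤ) = 1) := by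
              omega
            have d2 : ¬(k = (ℓ:ℤ) + (n:ℤ) - (s:ℤ) ∧ 0 ≤ k ∧ k ≤ (j:ℤ)) := by omega
            have hw : wvec q j ℓ s n k 0 = 0 := by
              simp only [wvec, and_true]
              rw [if_neg d1, if_neg d2]
              ring
            rw [hx, hw]
            ring
        · -- e = 1
          cases n with
          | zero =>
            rw [Finset.sum_range_one]
            simp only [Nat.sub_self, Nat.cast_zero, Int.toNat_one, gB_zero_right, sub_self,
              sub_zero, mul_zero, zero_mul, zpow_zero, one_mul]
            simp only [xvec, wvec, gB_zero_right, one_mul, and_true]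
            have c2 : ¬(k = (ℓ:ℤ) - (s:ℤ) ∧ (1:ℤ) = 0) := by omega
            have d2 : ¬(k = (ℓ:ℤ) + ((0:ℕ):ℤ) - (s:ℤ) ∧ 0 ≤ k ∧ k ≤ (j:ℤ) ∧ (1:ℤ) = 0) := by
              omega
            rw [if_neg c2, if_neg d2]
            by_cases hkv : k = (ℓ:ℤ) - s - 1
            · have c1 : k = (ℓ:ℤ) - (s:ℤ) - 1 := by omega
              have d1 : k = (ℓ:ℤ) + ((0:ℕ):ℤ) - (s:ℤ) - 1 ∧ 0 ≤ k ∧ k ≤ (j:ℤ) := by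
                omega
              rw [if_pos c1, if_pos d1]
            · have c1 : ¬(k = (ℓ:ℤ) - (s:ℤ) - 1) := by omega
              have d1 : ¬(k = (ℓ:ℤ) + ((0:ℕ):ℤ) - (s:ℤ) - 1 ∧ 0 ≤ k ∧ k ≤ (j:ℤ)) := by
                omega
              rw [if_neg c1, if_neg d1]
          | succ n' =>
            rw [Finset.sum_range_succ, Finset.sum_range_succ,
              Finset.sum_eq_zero (fun m hm => by
                rw [gB_eq_zero_of_lt hq0 (Int.toNat 1) (n' + 1 - m)
                  (by have := Finset.mem_range.mp hm; omega)]
                ring), zero_add]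
            simp only [show n' + 1 - n' = 1 from by omega, Nat.sub_self, Nat.cast_zero,
              Nat.cast_one, Int.toNat_one, gB_zero_right, gB_one_one, sub_self, sub_zero,
              mul_zero, zpow_zero, one_mul]
            by_cases hkv : k = (ℓ:ℤ) - s + n'
            · have c1 : ¬(k - (n':ℤ) = (ℓ:ℤ) - (s:ℤ) - 1 ∧ (0:ℤ) = 1) := by omega
              have c2 : k - (n':ℤ) = (ℓ:ℤ) - (s:ℤ) := by omega
              have hx0 : xvec q ℓ s (k - (n':ℤ)) 0 = q ^ ((ℓ:ℤ) - s) := by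
                simp only [xvec, and_true]
                rw [if_neg c1, if_pos c2]
                ring
              have c3 : k - ((n'+1 : ℕ):ℤ) = (ℓ:ℤ) - (s:ℤ) - 1 := by
                push_cast
                omega
              have c4 : ¬(k - ((n'+1 : ℕ):ℤ) = (ℓ:ℤ) - (s:ℤ) ∧ (1:ℤ) = 0) := by omega
              have hx1 : xvec q ℓ s (k - ((n'+1 : ℕ):ℤ)) 1 = 1 := by
                simp only [xvec, and_true]
                rw [if_pos c3, if_neg c4]
                ring
              have d1 : k = (ℓ:ℤ) + ((n'+1 : ℕ):ℤ) - (s:ℤ) - 1 ∧ 0 ≤ k ∧ k ≤ (j:ℤ) := by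
                push_cast
                omega
              have d2 : ¬(k = (ℓ:ℤ) + ((n'+1 : ℕ):ℤ) - (s:ℤ) ∧ 0 ≤ k ∧ k ≤ (j:ℤ) ∧
                  (1:ℤ) = 0) := by omega
              have hw : wvec q j ℓ s (n'+1) k 1 = 1 := by
                simp only [wvec, and_true]
                rw [if_pos d1, if_neg d2]
                ring
              rw [hx0, hx1, hw, mul_one, show (Int.toNat k) = ℓ + n' - s from by omega,
                show ℓ + (n'+1) - s = (ℓ + n' - s) + 1 from by omega, gB_succ_succ]
              rw [pw3]
              rw [show (n':ℤ)*(((n'+1:ℕ):ℤ) - (n':ℤ)) + ((1:ℤ)-2)*(n':ℤ) + ((ℓ:ℤ)-(s:ℤ))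
                  = ((ℓ+n'-s : ℕ):ℤ) - (n':ℤ) from by
                    push_cast [Nat.cast_sub (show s ≤ ℓ + n' by omega)]; ring,
                show ((1:ℤ)-2)*((n'+1:ℕ):ℤ) = -((n':ℤ)+1) from by push_cast; ring]
              ring
            · have c1 : ¬(k - (n':ℤ) = (ℓ:ℤ) - (s:ℤ) - 1 ∧ (0:ℤ) = 1) := by omega
              have c2 : ¬(k - (n':ℤ) = (ℓ:ℤ) - (s:ℤ)) := by omega
              have hx0 : xvec q ℓ s (k - (n':ℤ)) 0 = 0 := by
                simp only [xvec, and_true]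
                rw [if_neg c1, if_neg c2]
                ring
              have c3 : ¬(k - ((n'+1 : ℕ):ℤ) = (ℓ:ℤ) - (s:ℤ) - 1) := by
                push_cast
                omega
              have c4 : ¬(k - ((n'+1 : ℕ):ℤ) = (ℓ:ℤ) - (s:ℤ) ∧ (1:ℤ) = 0) := by omega
              have hx1 : xvec q ℓ s (k - ((n'+1 : ℕ):ℤ)) 1 = 0 := by
                simp only [xvec, and_true]
                rw [if_neg c3, if_neg c4]
                ring
              have d1 : ¬(k = (ℓ:ℤ) + ((n'+1 : ℕ):ℤ) - (s:ℤ) - 1 ∧ 0 ≤ k ∧ k ≤ (j:ℤ)) := by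
                push_cast
                omega
              have d2 : ¬(k = (ℓ:ℤ) + ((n'+1 : ℕ):ℤ) - (s:ℤ) ∧ 0 ≤ k ∧ k ≤ (j:ℤ) ∧
                  (1:ℤ) = 0) := by omega
              have hw : wvec q j ℓ s (n'+1) k 1 = 0 := by
                simp only [wvec, and_true]
                rw [if_neg d1, if_neg d2]
                ring
              rw [hx0, hx1, hw]
              ring
      · have d1 : ¬(k = (ℓ:ℤ) + (n:ℤ) - (s:ℤ) - 1 ∧ 0 ≤ k ∧ k ≤ (j:ℤ) ∧ e = 1) := by omega
        have d2 : ¬(k = (ℓ:ℤ) + (n:ℤ) - (s:ℤ) ∧ 0 ≤ k ∧ k ≤ (j:ℤ) ∧ e = 0) := by omega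
        have hw : wvec q j ℓ s n k e = 0 := by
          simp only [wvec]
          rw [if_neg d1, if_neg d2]
          ring
        rw [hw, Finset.sum_eq_zero (fun m hm => by rw [if_neg he]; simp)]
        ring
    · have d1 : ¬(k = (ℓ:ℤ) + (n:ℤ) - (s:ℤ) - 1 ∧ 0 ≤ k ∧ k ≤ (j:ℤ) ∧ e = 1) := by omega
      have d2 : ¬(k = (ℓ:ℤ) + (n:ℤ) - (s:ℤ) ∧ 0 ≤ k ∧ k ≤ (j:ℤ) ∧ e = 0) := by omega
      have hw : wvec q j ℓ s n k e = 0 := by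
        simp only [wvec]
        rw [if_neg d1, if_neg d2]
        ring
      rw [hw, Finset.sum_eq_zero (fun m hm => by rw [if_neg hk]; simp)]
      ring
  have hℓ0 : 0 < ℓ := by omega
  have hper : ∀ a b : ℤ, a - b = 2*(ℓ:ℤ) → q^a = q^b := by
    intro a b hab
    have h2l : q^((2*ℓ : ℕ) : ℤ) = 1 := by
      rw [zpow_natCast, pow_mul, hq.pow_eq_one]
    calc q^a = q^(b + ((2*ℓ : ℕ) : ℤ)) := by congr 1; push_cast; omega
    _ = q^b * q^((2*ℓ : ℕ) : ℤ) := zpow_add₀ hq0 _ _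
    _ = q^b := by rw [h2l, mul_one]
  have part2 : ∀ n : ℕ, 1 ≤ n → dE q j n (xvec q ℓ s) = 0 := by
    intro n hn
    funext k e
    show (∑ m ∈ Finset.range (n + 1),
        q ^ (-((m : ℤ) * ((n : ℤ) - m))) *
          op1 (fun v => Eop q j (n - m) (Kpow q j (-(m : ℤ)) v))
            (op2 (Eop q 1 m) (xvec q ℓ s)) k e) = 0
    have hterm : ∀ m : ℕ,
        op1 (fun v => Eop q j (n - m) (Kpow q j (-(m : ℤ)) v))
          (op2 (Eop q 1 m) (xvec q ℓ s)) k e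
        = (if 0 ≤ k ∧ k ≤ (j:ℤ) then gB q ((j:ℤ) - k).toNat (n-m) *
            (if 0 ≤ k + ((n-m : ℕ):ℤ) ∧ k + ((n-m : ℕ):ℤ) ≤ (j:ℤ) then
              q ^ (((j:ℤ) - 2*(k + ((n-m : ℕ):ℤ)))*(-(m:ℤ))) *
              (if 0 ≤ e ∧ e ≤ 1 then
                gB q ((1:ℤ) - e).toNat m * xvec q ℓ s (k + ((n-m : ℕ):ℤ)) (e + m)
               else 0) else 0) else 0) := by
      intro m
      simp only [op1, op2, Eop, Kpow, Nat.cast_one]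
    by_cases hk : 0 ≤ k ∧ k ≤ (j:ℤ)
    · by_cases he : 0 ≤ e ∧ e ≤ 1
      · rw [Finset.sum_congr rfl (fun m _ => by rw [hterm m])]
        simp only [if_pos hk, if_pos he]
        have he01 : e = 0 ∨ e = 1 := by omega
        rcases he01 with rfl | rfl
        · -- e = 0 : terms m = 0 and m = 1
          obtain ⟨n'', rfl⟩ : ∃ n'', n = n'' + 1 := ⟨n - 1, by omega⟩
          rw [Finset.sum_range_succ', Finset.sum_range_succ',
            Finset.sum_eq_zero (fun m hm => by
              rw [gB_eq_zero_of_lt hq0 ((1:ℤ) - 0).toNat (m + 1 + 1) (by omega)]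
              simp)]
          simp only [Nat.sub_zero, Nat.cast_zero, Nat.cast_one, Nat.add_sub_cancel, add_zero,
            zero_add, neg_zero, mul_zero, zero_mul, zpow_zero, one_mul, mul_one, Int.toNat_one,
            show ((1:ℤ) - 0).toNat = 1 from rfl, gB_one_one, gB_zero_right]
          by_cases hkv : k = (ℓ:ℤ) - s - (n''+1)
          · -- on support
            have hc1 : ¬(k + (((n''+1) : ℕ):ℤ) = (ℓ:ℤ) - (s:ℤ) - 1 ∧ (0:ℤ) = 1) := by omega
            have hc2 : k + (((n''+1) : ℕ):ℤ) = (ℓ:ℤ) - (s:ℤ) := by push_cast; omega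
            have hx0 : xvec q ℓ s (k + (((n''+1) : ℕ):ℤ)) 0 = q ^ ((ℓ:ℤ) - s) := by
              simp only [xvec, and_true]
              rw [if_neg hc1, if_pos hc2]
              ring
            have hc3 : k + ((n'' : ℕ):ℤ) = (ℓ:ℤ) - (s:ℤ) - 1 := by push_cast; omega
            have hc4 : ¬(k + ((n'' : ℕ):ℤ) = (ℓ:ℤ) - (s:ℤ) ∧ (1:ℤ) = 0) := by
              push_cast; omega
            have hx1 : xvec q ℓ s (k + ((n'' : ℕ):ℤ)) 1 = 1 := by
              simp only [xvec, and_true]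
              rw [if_pos hc3, if_neg hc4]
              ring
            rw [hx0, hx1]
            have ht1 : 0 ≤ k + (n'':ℤ) ∧ k + (n'':ℤ) ≤ (j:ℤ) := by omega
            have ht2 : 0 ≤ k + (((n''+1) : ℕ):ℤ) ∧ k + (((n''+1) : ℕ):ℤ) ≤ (j:ℤ) := by
              push_cast
              omega
            rw [if_pos ht1, if_pos ht2, mul_one]
            by_cases hn2 : 1 ≤ n''
            · -- both q-binomials vanish by Lucas
              have hM : ((j:ℤ) - k).toNat = ℓ * (r + 1) + (n'' - 1) := by
                have hrl : ℓ * (r+1) = r * ℓ + ℓ := by ring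
                rw [hrl]
                generalize hA : r * ℓ = A at hi
                omega
              have hmod := (div_mod_eq_of hℓ0 hM (by omega)).2
              have hg1 : gB q ((j:ℤ) - k).toNat n'' = 0 := by
                apply gB_vanish hq0 hℓ hq
                rw [hmod, Nat.mod_eq_of_lt (show n'' < ℓ by omega)]
                omega
              have hg2 : gB q ((j:ℤ) - k).toNat (n''+1) = 0 := by
                apply gB_vanish hq0 hℓ hq
                rw [hmod, Nat.mod_eq_of_lt (show n''+1 < ℓ by omega)]
                omega
              rw [hg1, hg2]
              ring
            · -- n = 1 : the two terms cancel
              obtain rfl : n'' = 0 := by omega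
              have hM : ((j:ℤ) - k).toNat = ℓ * r + (ℓ - 1) := by
                have hcomm : ℓ * r = r * ℓ := Nat.mul_comm ℓ r
                omega
              have hGb : Gb (q^2) (((j:ℤ) - k).toNat) 1 = qint (q^2) (ℓ-1) := by
                rw [Gb_lucas hℓ hq, (div_mod_eq_of hℓ0 hM (by omega)).1,
                  (div_mod_eq_of hℓ0 hM (by omega)).2, Nat.div_eq_of_lt (by omega),
                  Nat.mod_eq_of_lt (by omega), Nat.choose_zero_right, Nat.cast_one, one_mul,
                  Gb_one]
              have hqi : qint (q^2) (ℓ-1) = -((q^2)^(ℓ-1)) := by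
                have h3 := qint_add (q^2) (ℓ-1) 1
                rw [show ℓ-1+1 = ℓ from by omega, qint_ell hℓ hq] at h3
                have h4 : qint (q^2) 1 = 1 := by simp [qint]
                rw [h4, mul_one] at h3
                linear_combination -h3
              have hgB1 : gB q (((j:ℤ) - k).toNat) 1 =
                  -(q ^ ((1:ℤ)*(1 - (((j:ℤ) - k).toNat : ℤ)) + ((2*(ℓ-1) : ℕ) : ℤ))) := by
                rw [gB_eq_Gb hq0, hGb, hqi,
                  show ((q:ℂ)^2)^(ℓ-1) = q ^ ((2*(ℓ-1) : ℕ) : ℤ) from by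
                    rw [zpow_natCast, pow_mul],
                  mul_neg, ← zpow_add₀ hq0]
                push_cast
                ring
              rw [hgB1, gB_zero_right, one_mul, ← zpow_add₀ hq0, neg_mul, ← zpow_add₀ hq0,
                hper (1 * (1 - ((((j:ℤ) - k).toNat : ℕ) : ℤ)) + ((2 * (ℓ - 1) : ℕ) : ℤ)
                    + ((ℓ:ℤ) - (s:ℤ)))
                  (-(((0 + 1 : ℕ) : ℤ) - 1) + ((j:ℤ) - 2 * (k + ((0:ℕ):ℤ))) * -1)
                  (by omega)]
              ring
          · -- off support : both xvec values vanish
            have hc1 : ¬(k + (((n''+1) : ℕ):ℤ) = (ℓ:ℤ) - (s:ℤ) - 1 ∧ (0:ℤ) = 1) := by omega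
            have hc2 : ¬(k + (((n''+1) : ℕ):ℤ) = (ℓ:ℤ) - (s:ℤ)) := by omega
            have hx0 : xvec q ℓ s (k + (((n''+1) : ℕ):ℤ)) 0 = 0 := by
              simp only [xvec, and_true]
              rw [if_neg hc1, if_neg hc2]
              ring
            have hc3 : ¬(k + ((n'' : ℕ):ℤ) = (ℓ:ℤ) - (s:ℤ) - 1) := by omega
            have hc4 : ¬(k + ((n'' : ℕ):ℤ) = (ℓ:ℤ) - (s:ℤ) ∧ (1:ℤ) = 0) := by omega
            have hx1 : xvec q ℓ s (k + ((n'' : ℕ):ℤ)) 1 = 0 := by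
              simp only [xvec, and_true]
              rw [if_neg hc3, if_neg hc4]
              ring
            rw [hx0, hx1]
            simp
        · -- e = 1 : only the m = 0 term, killed by Lucas
          rw [Finset.sum_range_succ',
            Finset.sum_eq_zero (fun m hm => by
              rw [show ((1:ℤ) - 1).toNat = 0 from rfl, gB_zero_left]
              simp)]
          simp only [Nat.sub_zero, Nat.cast_zero, add_zero, zero_add, neg_zero, mul_zero,
            zero_mul, zpow_zero, one_mul, mul_one, show ((1:ℤ) - 1).toNat = 0 from rfl,
            gB_zero_right]
          by_cases hkv : k = (ℓ:ℤ) - s - 1 - n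
          · have hc1 : k + ((n : ℕ):ℤ) = (ℓ:ℤ) - (s:ℤ) - 1 := by omega
            have hc2 : ¬(k + ((n : ℕ):ℤ) = (ℓ:ℤ) - (s:ℤ) ∧ (1:ℤ) = 0) := by omega
            have hx : xvec q ℓ s (k + ((n : ℕ):ℤ)) 1 = 1 := by
              simp only [xvec, and_true]
              rw [if_pos hc1, if_neg hc2]
              ring
            have hnℓ : n < ℓ := by omega
            have hM : ((j:ℤ) - k).toNat = ℓ * (r + 1) + (n - 1) := by
              have hrl : ℓ * (r+1) = r * ℓ + ℓ := by ring
              rw [hrl]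
              generalize hA : r * ℓ = A at hi
              omega
            have hgB : gB q ((j:ℤ) - k).toNat n = 0 := by
              apply gB_vanish hq0 hℓ hq
              rw [(div_mod_eq_of hℓ0 hM (by omega)).2, Nat.mod_eq_of_lt hnℓ]
              omega
            rw [hx, hgB]
            simp
          · have hc1 : ¬(k + ((n : ℕ):ℤ) = (ℓ:ℤ) - (s:ℤ) - 1) := by omega
            have hc2 : ¬(k + ((n : ℕ):ℤ) = (ℓ:ℤ) - (s:ℤ) ∧ (1:ℤ) = 0) := by omega
            have hx : xvec q ℓ s (k + ((n : ℕ):ℤ)) 1 = 0 := by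
              simp only [xvec, and_true]
              rw [if_neg hc1, if_neg hc2]
              ring
            rw [hx]
            simp
      · rw [Finset.sum_eq_zero (fun m hm => by rw [hterm m, if_neg he]; simp)]
    · rw [Finset.sum_eq_zero (fun m hm => by rw [hterm m, if_neg hk]; simp)]
  have part4 : ∀ n n₁ n₂ : ℕ, n = n₁ * ℓ + n₂ → n₂ < ℓ → (r + 1 ≤ n₁ ∨ s ≤ n₂) →
      dF q j n (xvec q ℓ s) = 0 := by
    intro n n₁ n₂ hn hn2 hor
    rw [part3 n]
    rcases hor with hr1 | hs2
    · -- n₁ ≥ r + 1 : wvec vanishes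
      have hmul : r * ℓ + ℓ ≤ n₁ * ℓ := by
        calc r * ℓ + ℓ = (r + 1) * ℓ := by ring
        _ ≤ n₁ * ℓ := Nat.mul_le_mul_right ℓ hr1
      funext k e
      show gB q (ℓ + n - s) n * wvec q j ℓ s n k e = 0
      have hw : wvec q j ℓ s n k e = 0 := by
        simp only [wvec]
        rw [if_neg, if_neg]
        · norm_num
        · rintro ⟨h1, h2, h3, h4⟩
          generalize hA : r * ℓ = A at hi hmul
          generalize hB : n₁ * ℓ = B at hn hmul
          omega
        · rintro ⟨h1, h2, h3, h4⟩
          generalize hA : r * ℓ = A at hi hmul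
          generalize hB : n₁ * ℓ = B at hn hmul
          omega
      rw [hw, mul_zero]
    · -- n₂ ≥ s : the q-binomial vanishes by Lucas
      have e1 : ℓ + n - s = ℓ * (n₁ + 1) + (n₂ - s) := by
        rw [hn, mul_comm n₁ ℓ, Nat.mul_add, Nat.mul_one]
        generalize ℓ * n₁ = A
        omega
      have e2 : n = ℓ * n₁ + n₂ := by rw [hn, mul_comm n₁ ℓ]
      have h1 := (div_mod_eq_of (show 0 < ℓ by omega) e1 (by omega)).2
      have h2 := (div_mod_eq_of (show 0 < ℓ by omega) e2 hn2).2
      have hgB : gB q (ℓ + n - s) n = 0 := gB_vanish hq0 hℓ hq (by omega)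
      funext k e
      show gB q (ℓ + n - s) n * wvec q j ℓ s n k e = 0
      rw [hgB, zero_mul]
  have part5 : Module.finrank ℂ
        ↥(Submodule.span ℂ (Set.range fun n : ℕ => dF q j n (xvec q ℓ s))) ≤
      (r + 1) * s := by
    classical
    set g : ℕ → (ℤ → ℤ → ℂ) := fun n => dF q j n (xvec q ℓ s) with hg
    set T : Finset ℕ := (Finset.range (r+1) ×ˢ Finset.range s).image (fun p => p.1 * ℓ + p.2)
      with hT
    have hsub : Set.range g ⊆ insert (0 : ℤ → ℤ → ℂ) ↑(T.image g) := by
      rintro _ ⟨n, rfl⟩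
      by_cases h0 : g n = 0
      · rw [h0]; exact Set.mem_insert _ _
      · right
        simp only [Finset.coe_image, Set.mem_image, Finset.mem_coe]
        refine ⟨n, ?_, rfl⟩
        have hdm : n = (n / ℓ) * ℓ + n % ℓ := by
          rw [mul_comm]; exact (Nat.div_add_mod n ℓ).symm
        have hlt : n % ℓ < ℓ := Nat.mod_lt n (by omega)
        have hgood : ¬ (r + 1 ≤ n / ℓ ∨ s ≤ n % ℓ) := by
          intro hbad
          exact h0 (part4 n (n / ℓ) (n % ℓ) hdm hlt hbad)
        push_neg at hgood
        rw [hT]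
        simp only [Finset.mem_image, Finset.mem_product, Finset.mem_range]
        exact ⟨(n / ℓ, n % ℓ), ⟨by omega, by omega⟩, hdm.symm⟩
    have h1 : Submodule.span ℂ (Set.range g) ≤ Submodule.span ℂ ↑(T.image g) := by
      have h0 : Submodule.span ℂ (Set.range g) ≤
          Submodule.span ℂ (insert (0 : ℤ → ℤ → ℂ) ↑(T.image g)) := Submodule.span_mono hsub
      rwa [Submodule.span_insert_zero] at h0
    have h2 : Module.finrank ℂ ↥(Submodule.span ℂ (↑(T.image g) : Set (ℤ → ℤ → ℂ))) ≤
        (T.image g).card := finrank_span_finset_le_card (T.image g)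
    have h3 : (T.image g).card ≤ T.card := Finset.card_image_le
    have h4 : T.card ≤ (r+1) * s := by
      calc T.card ≤ ((Finset.range (r+1) ×ˢ Finset.range s)).card := Finset.card_image_le
      _ = (r+1) * s := by rw [Finset.card_product, Finset.card_range, Finset.card_range]
    have h5 := Submodule.finrank_mono h1
    omega
  exact ⟨part1, part2, part3, part4, part5⟩
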